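/- Let f : ℝ → ℝ be differentiable with f(t)·t > 0 for all t ≠ 0, and suppose there exists μ > 1 such that t²·f'(t) ≥ μ·f(t)·t for all t ≠ 0. Then for all t ≠ 0, t·f(t) ≥ (1+μ)·F(t) > 0, where F(t) = ∫₀ᵗ f(s) ds. -/

import Mathlib

/-! With `F` the primitive of `f` vanishing at `0`, the function `G t = t f t - (1 + μ) F t` has
`G' t = t f' t - μ f t`, which has the sign of `t` by the hypothesis on `f'`. Hence `G` has a global
minimum `G 0 = 0`. Positivity of `F` comes from `f` having the sign of its argument. -/

open intervalIntegral

theorem le_of_forall_sub_mul_deriv_nonneg {G : ℝ → ℝ} (hG : Differentiable ℝ G)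
    {a : ℝ} (hsign : ∀ x ≠ a, 0 ≤ (x - a) * deriv G x) (t : ℝ) : G a ≤ G t := by
  rcases le_total a t with hat | hta
  · refine monotoneOn_of_deriv_nonneg (convex_Ici a) hG.continuous.continuousOn
      hG.differentiableOn (fun x hx => ?_) Set.self_mem_Ici hat hat
    rw [interior_Ici] at hx
    exact nonneg_of_mul_nonneg_right (hsign x (ne_of_gt hx)) (sub_pos.2 hx)
  · refine antitoneOn_of_deriv_nonpos (convex_Iic a) hG.continuous.continuousOn
      hG.differentiableOn (fun x hx => ?_) hta Set.self_mem_Iic hta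
    rw [interior_Iic] at hx
    exact nonpos_of_mul_nonneg_right (hsign x (ne_of_lt hx)) (sub_neg.2 hx)

theorem integral_pos_of_forall_mul_self_pos {f : ℝ → ℝ} (hf : Continuous f)
    (hpos : ∀ s ≠ 0, 0 < f s * s) {t : ℝ} (ht : t ≠ 0) : 0 < ∫ s in (0 : ℝ)..t, f s := by
  rcases ht.lt_or_gt with htneg | htpos
  · have hneg : 0 < ∫ s in t..0, -f s :=
      intervalIntegral_pos_of_pos_on (hf.intervalIntegrable t 0).neg
        (fun x hx => neg_pos.2 (neg_of_mul_pos_left (hpos x hx.2.ne) hx.2.le)) htneg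
    rwa [integral_neg, ← integral_symm] at hneg
  · exact intervalIntegral_pos_of_pos_on (hf.intervalIntegrable 0 t)
      (fun x hx => pos_of_mul_pos_left (hpos x hx.1.ne') hx.1.le) htpos

theorem stmt0 (f : ℝ → ℝ) (hf : Differentiable ℝ f)
    (hpos : ∀ t : ℝ, t ≠ 0 → f t * t > 0)
    (μ : ℝ) (hμ : 1 < μ)
    (h2 : ∀ t : ℝ, t ≠ 0 → t ^ 2 * deriv f t ≥ μ * (f t * t)) :
    ∀ t : ℝ, t ≠ 0 →
      t * f t ≥ (1 + μ) * (∫ s in (0:ℝ)..t, f s) ∧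
      (1 + μ) * (∫ s in (0:ℝ)..t, f s) > 0 := by
  intro t ht
  set F : ℝ → ℝ := fun x => ∫ s in (0:ℝ)..x, f s
  set G : ℝ → ℝ := fun x => x * f x - (1 + μ) * F x
  have hG : ∀ x, HasDerivAt G (x * deriv f x - μ * f x) x := fun x =>
    (((hasDerivAt_id x).mul (hf x).hasDerivAt).sub
      ((hf.continuous.integral_hasStrictDerivAt 0 x).hasDerivAt.const_mul (1 + μ))).congr_deriv
      (by simp only [id]; ring)
  have hG0 : G 0 ≤ G t :=
    le_of_forall_sub_mul_deriv_nonneg (fun x => (hG x).differentiableAt)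
      (fun x hx => by rw [(hG x).deriv]; nlinarith [h2 x hx]) t
  have hF : 0 < F t := integral_pos_of_forall_mul_self_pos hf.continuous hpos ht
  simp only [G, F, integral_same, zero_mul, mul_zero, sub_zero] at hG0 hF
  exact ⟨by linarith, mul_pos (by linarith) hF⟩
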